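/- Suppose 0 < r < ρ, B is analytic on the closed disk |s − z| ≤ ρ with B(z) = 0, B'(z) ≠ 0, and B(s) ≠ 0 for s ≠ z in that disk; suppose A is analytic and nonvanishing on the closed disk |s − z| ≤ ρ' with r < ρ'. Then for |s − z| ≤ r with s ≠ z: |1/(A(s)B(s)) − 1/(A(z)B'(z)(s−z))| ≤ |B'(z)|^{−1} · ( M(B,z,ρ)/(ρ(ρ−r)|A(s)·B(s)/(s−z)|) + M(1/A,z,ρ')/(ρ'−r) ), where M(h,z,ρ) := max{|h(w)| : |w − z| = ρ}. -/

import Mathlib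

/-! Write `B s = (s - z) g(s)` with `g = dslope B z`, so `g(z) = B'(z)`. Then the difference
is `B'(z)⁻¹` times a combination of the difference quotients at `z` of `A⁻¹` and of `g`.
A difference quotient `(f s - f z) / (s - z)` is `(2πi)⁻¹ ∮ f w / ((w - s)(w - z)) dw` over
the circle of radius `R` about `z`, hence at most `max_{|w - z| = R} |f w| / (R - r)`;
on the circle of radius `ρ`, `|g| ≤ M(B, z, ρ) / ρ`. -/

open Metric

open Complex Real

section CauchyEstimate

variable {E : Type*} [NormedAddCommGroup E] [NormedSpace ℂ E]

theorem circleIntegrable_sub_inv_smul {f : ℂ → E} {c w : ℂ} {R : ℝ}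
    (hf : ContinuousOn f (sphere c R)) (hw : w ∈ ball c R) :
    CircleIntegrable (fun z => (z - w)⁻¹ • f z) c R :=
  ContinuousOn.circleIntegrable (pos_of_mem_ball hw).le <|
    ((continuousOn_id.sub continuousOn_const).inv₀ fun _ hz =>
      sub_ne_zero.2 (sphere_disjoint_ball.ne_of_mem hz hw)).smul hf

variable [CompleteSpace E]

theorem DiffContOnCl.dslope_ball {f : ℂ → E} {c : ℂ} {R : ℝ} (hf : DiffContOnCl ℂ f (ball c R))
    (hR : 0 < R) : DiffContOnCl ℂ (dslope f c) (ball c R) :=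
  .mk_ball ((Complex.differentiableOn_dslope (ball_mem_nhds c hR)).2 hf.differentiableOn)
    ((continuousOn_dslope (closedBall_mem_nhds c hR)).2
      ⟨hf.continuousOn_ball, hf.differentiableOn.differentiableAt (ball_mem_nhds c hR)⟩)

/-- Subtract the Cauchy formulas at `w` and at `c`. -/
theorem DiffContOnCl.slope_eq_circleIntegral {f : ℂ → E} {c w : ℂ} {R : ℝ}
    (hf : DiffContOnCl ℂ f (ball c R)) (hw : w ∈ ball c R) (hwc : w ≠ c) :
    slope f c w = (2 * π * I : ℂ)⁻¹ • ∮ z in C(c, R), ((z - w)⁻¹ * (z - c)⁻¹) • f z := by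
  have hR : 0 < R := pos_of_mem_ball hw
  have hc : c ∈ ball c R := mem_ball_self hR
  have hf_sphere : ContinuousOn f (sphere c R) := hf.continuousOn_ball.mono sphere_subset_closedBall
  have h_partial : Set.EqOn (fun z => ((z - w)⁻¹ * (z - c)⁻¹) • f z)
      (fun z => (w - c)⁻¹ • ((z - w)⁻¹ • f z - (z - c)⁻¹ • f z)) (sphere c R) := by
    intro z hz
    have hzw : z - w ≠ 0 := sub_ne_zero.2 (sphere_disjoint_ball.ne_of_mem hz hw)
    have hzc : z - c ≠ 0 := sub_ne_zero.2 (sphere_disjoint_ball.ne_of_mem hz hc)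
    have hwc' : w - c ≠ 0 := sub_ne_zero.2 hwc
    simp only [← sub_smul, smul_smul]
    congr 1
    field_simp
    ring
  rw [circleIntegral.integral_congr hR.le h_partial, circleIntegral.integral_smul,
    circleIntegral.integral_sub (circleIntegrable_sub_inv_smul hf_sphere hw)
      (circleIntegrable_sub_inv_smul hf_sphere hc),
    hf.circleIntegral_sub_inv_smul hw, hf.circleIntegral_sub_inv_smul hc, ← smul_sub,
    smul_comm, inv_smul_smul₀ two_pi_I_ne_zero, slope, vsub_eq_sub]

theorem DiffContOnCl.norm_slope_le {f : ℂ → E} {c w : ℂ} {r R C : ℝ}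
    (hf : DiffContOnCl ℂ f (ball c R)) (hw : w ∈ closedBall c r) (hwc : w ≠ c) (hrR : r < R)
    (hC : ∀ z ∈ sphere c R, ‖f z‖ ≤ C) :
    ‖slope f c w‖ ≤ C / (R - r) := by
  have hr : 0 < r := dist_pos.2 hwc |>.trans_le hw
  have hR : 0 < R := hr.trans hrR
  have h_kernel : ∀ z ∈ sphere c R, ‖((z - w)⁻¹ * (z - c)⁻¹) • f z‖ ≤ C / (R * (R - r)) := by
    intro z hz
    have hzc : ‖z - c‖ = R := mem_sphere_iff_norm.1 hz
    have hzw : R - r ≤ ‖z - w‖ := by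
      have := norm_sub_norm_le (z - c) (w - c)
      rw [sub_sub_sub_cancel_right, hzc] at this
      linarith [mem_closedBall_iff_norm.1 hw]
    rw [norm_smul, norm_mul, norm_inv, norm_inv, hzc, div_eq_inv_mul, mul_inv, mul_comm R⁻¹]
    gcongr
    exact hC z hz
  calc ‖slope f c w‖ ≤ R * (C / (R * (R - r))) := by
        rw [hf.slope_eq_circleIntegral (closedBall_subset_ball hrR hw) hwc]
        exact circleIntegral.norm_two_pi_i_inv_smul_integral_le_of_norm_le_const hR.le h_kernel
    _ = C / (R - r) := by field_simp

end CauchyEstimate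

theorem IsCompact.norm_le_sSup_image_norm {X E : Type*} [TopologicalSpace X]
    [SeminormedAddCommGroup E] {f : X → E} {K : Set X} (hK : IsCompact K) (hf : ContinuousOn f K)
    {x : X} (hx : x ∈ K) : ‖f x‖ ≤ sSup ((fun y => ‖f y‖) '' K) :=
  le_csSup (hK.bddAbove_image hf.norm) (Set.mem_image_of_mem _ hx)

theorem one_div_mul_sub_one_div_eq_slope {𝕜 : Type*} [NontriviallyNormedField 𝕜] {A B : 𝕜 → 𝕜}
    {z s : 𝕜} (hsz : s ≠ z) (hBz : B z = 0) (hBs : B s ≠ 0) (hB' : deriv B z ≠ 0) :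
    1 / (A s * B s) - 1 / (A z * deriv B z * (s - z)) =
      (deriv B z)⁻¹ * (slope (fun w => (A w)⁻¹) z s -
        slope (dslope B z) z s / (A s * (B s / (s - z)))) := by
  have hsz' : s - z ≠ 0 := sub_ne_zero.2 hsz
  rw [slope_def_field, slope_def_field, dslope_same, dslope_of_ne _ hsz, slope_def_field, hBz,
    sub_zero]
  field_simp
  ring

theorem delta_bound_general
    (A B : ℂ → ℂ) (z : ℂ) (r ρ ρ' : ℝ)
    (hr : 0 < r) (hrρ : r < ρ) (hrρ' : r < ρ')
    (UB : Set ℂ) (hUBsub : closedBall z ρ ⊆ UB)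
    (hB : DifferentiableOn ℂ B UB)
    (UA : Set ℂ) (hUAsub : closedBall z ρ' ⊆ UA)
    (hA : DifferentiableOn ℂ A UA)
    (hAne : ∀ w ∈ closedBall z ρ', A w ≠ 0)
    (hBz : B z = 0) (hB' : deriv B z ≠ 0)
    (hBne : ∀ w ∈ closedBall z ρ, w ≠ z → B w ≠ 0)
    (MB MA : ℝ)
    (hMB : MB = sSup ((fun w => ‖B w‖) '' sphere z ρ))
    (hMA : MA = sSup ((fun w => ‖(A w)⁻¹‖) '' sphere z ρ')) :
    ∀ s ∈ closedBall z r, s ≠ z →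
      ‖1 / (A s * B s) - 1 / (A z * deriv B z * (s - z))‖ ≤
        ‖deriv B z‖⁻¹ *
          (MB / (ρ * (ρ - r) * ‖A s * (B s / (s - z))‖) + MA / (ρ' - r)) := by
  intro s hs hsz
  have hρ : 0 < ρ := hr.trans hrρ
  have hB_ball : DifferentiableOn ℂ B (closedBall z ρ) := hB.mono hUBsub
  have hA_inv : DifferentiableOn ℂ (fun w => (A w)⁻¹) (closedBall z ρ') :=
    (hA.mono hUAsub).inv hAne
  have hσA : ‖slope (fun w => (A w)⁻¹) z s‖ ≤ MA / (ρ' - r) :=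
    (hA_inv.diffContOnCl_ball subset_rfl).norm_slope_le hs hsz hrρ' fun w hw =>
      hMA ▸ (isCompact_sphere z ρ').norm_le_sSup_image_norm
        (hA_inv.continuousOn.mono sphere_subset_closedBall) hw
  have hσB : ‖slope (dslope B z) z s‖ ≤ MB / ρ / (ρ - r) := by
    refine ((hB_ball.diffContOnCl_ball subset_rfl).dslope_ball hρ).norm_slope_le hs hsz hrρ
      fun w hw => ?_
    rw [dslope_of_ne _ (ne_of_mem_sphere hw hρ.ne'), slope_def_field, hBz, sub_zero, norm_div,
      mem_sphere_iff_norm.1 hw, hMB]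
    gcongr
    exact (isCompact_sphere z ρ).norm_le_sSup_image_norm
      (hB_ball.continuousOn.mono sphere_subset_closedBall) hw
  rw [one_div_mul_sub_one_div_eq_slope hsz hBz
    (hBne s (closedBall_subset_closedBall hrρ.le hs) hsz) hB', norm_mul, norm_inv]
  gcongr ‖deriv B z‖⁻¹ * ?_
  calc _ ≤ ‖slope (fun w => (A w)⁻¹) z s‖ +
          ‖slope (dslope B z) z s‖ / ‖A s * (B s / (s - z))‖ := by
        rw [← norm_div]
        exact norm_sub_le _ _
    _ ≤ MA / (ρ' - r) + MB / ρ / (ρ - r) / ‖A s * (B s / (s - z))‖ := by gcongr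
    _ = _ := by rw [add_comm, div_div, div_div, mul_assoc]

theorem delta_bound
    (A B : ℂ → ℂ) (z : ℂ) (r ρ ρ' : ℝ)
    (hr : 0 < r) (hrρ : r < ρ) (hrρ' : r < ρ')
    (UB : Set ℂ) (hUB : IsOpen UB) (hUBsub : closedBall z ρ ⊆ UB)
    (hB : DifferentiableOn ℂ B UB)
    (UA : Set ℂ) (hUA : IsOpen UA) (hUAsub : closedBall z ρ' ⊆ UA)
    (hA : DifferentiableOn ℂ A UA)
    (hAne : ∀ w ∈ closedBall z ρ', A w ≠ 0)
    (hBz : B z = 0) (hB' : deriv B z ≠ 0)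
    (hBne : ∀ w ∈ closedBall z ρ, w ≠ z → B w ≠ 0)
    (MB MA : ℝ)
    (hMB : MB = sSup ((fun w => ‖B w‖) '' sphere z ρ))
    (hMA : MA = sSup ((fun w => ‖(A w)⁻¹‖) '' sphere z ρ')) :
    ∀ s ∈ closedBall z r, s ≠ z →
      ‖1 / (A s * B s) - 1 / (A z * deriv B z * (s - z))‖ ≤
        ‖deriv B z‖⁻¹ *
          (MB / (ρ * (ρ - r) * ‖A s * (B s / (s - z))‖) + MA / (ρ' - r)) :=
  delta_bound_general A B z r ρ ρ' hr hrρ hrρ' UB hUBsub hB UA hUAsub hA hAne hBz hB' hBne MB MA hMB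
    hMA
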